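/- arXiv:2501.01261 — 9 statements merged into one kernel-verified Lean document; each statement's English description precedes it below -/
import Mathlib

section
/- Let X be a topological space, Y a compact countable topological space, and f : X × Y → ℝ̄ a separately continuous function. Then the pair of extremal sections (∧_f, ∨_f) is a stable pair of Hahn on X. -/
/-- A pair `(g, h)` of extended-real-valued functions on `X` is a *stable pair of Hahn*
if there is a sequence of continuous functions `u n` such that for every `x`,
`g x = min_n (u n x)` and `h x = max_n (u n x)` (the infimum and supremum are attained). -/
def StablePairOfHahn {X : Type*} [TopologicalSpace X] (g h : X → EReal) : Prop :=
  ∃ u : ℕ → X → EReal, (∀ n, Continuous (u n)) ∧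
    ∀ x, IsLeast (Set.range fun n => u n x) (g x) ∧
      IsGreatest (Set.range fun n => u n x) (h x)

/-!
Enumerate the countable space `Y` as `y₀, y₁, …` and take `u n := f (·, yₙ)`, continuous by
separate continuity. For fixed `x`, the values `u n x` exhaust the range of the continuous map
`f (x, ·)` on the compact space `Y`, whose infimum and supremum are therefore attained.
-/

open Set

section CompactRange

variable {Y α : Type*} [TopologicalSpace Y] [CompactSpace Y] [Nonempty Y]
  [ConditionallyCompleteLinearOrder α] [TopologicalSpace α] {g : Y → α}

theorem Continuous.isLeast_range_iInf [ClosedIicTopology α] (hg : Continuous g) :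
    IsLeast (range g) (⨅ y, g y) :=
  (isCompact_range hg).isLeast_sInf (range_nonempty g)

theorem Continuous.isGreatest_range_iSup [ClosedIciTopology α] (hg : Continuous g) :
    IsGreatest (range g) (⨆ y, g y) :=
  (isCompact_range hg).isGreatest_sSup (range_nonempty g)

end CompactRange

theorem stmt0 {X Y : Type*} [TopologicalSpace X] [TopologicalSpace Y]
    [CompactSpace Y] [Countable Y] [Nonempty Y]
    (f : X × Y → EReal)
    (hf1 : ∀ x : X, Continuous fun y : Y => f (x, y))
    (hf2 : ∀ y : Y, Continuous fun x : X => f (x, y)) :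
    StablePairOfHahn (fun x => ⨅ y : Y, f (x, y)) (fun x => ⨆ y : Y, f (x, y)) := by
  obtain ⟨e, he⟩ := exists_surjective_nat Y
  refine ⟨fun n x => f (x, e n), fun n => hf2 (e n), fun x => ?_⟩
  have hrange : (range fun n => f (x, e n)) = range fun y => f (x, y) :=
    he.range_comp fun y => f (x, y)
  rw [hrange]
  exact ⟨(hf1 x).isLeast_range_iInf, (hf1 x).isGreatest_range_iSup⟩
end

section
/- Let X be a topological space, Y a functionally closed subspace of X, (g,h) a countable pair of Hahn on X, and f₀ : X → ℝ̄ a continuous function such that g(y) ≤ f₀(y) ≤ h(y) for every y ∈ Y. Then there exists a continuous function f : X → ℝ̄ such that f(y) = f₀(y) for every y ∈ Y and g(x) ≤ f(x) ≤ h(x) for every x ∈ X. -/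
/-- A set `A ⊆ X` is *functionally closed* if it is the zero set of a continuous
function `α : X → [0,1]`. -/
def FunctionallyClosed {X : Type*} [TopologicalSpace X] (A : Set X) : Prop :=
  ∃ α : X → ℝ, Continuous α ∧ (∀ x, α x ∈ Set.Icc (0 : ℝ) 1) ∧ A = α ⁻¹' {0}

/-- A pair `(g, h)` is a *countable pair of Hahn* if there are sequences of continuous
functions `gs n`, `hs n` with `g x = ⨅ n, gs n x ≤ ⨆ n, hs n x = h x` for every `x`. -/
def CountablePairOfHahn {X : Type*} [TopologicalSpace X] (g h : X → EReal) : Prop :=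
  ∃ gs hs : ℕ → X → EReal, (∀ n, Continuous (gs n)) ∧ (∀ n, Continuous (hs n)) ∧
    ∀ x, g x = ⨅ n, gs n x ∧ h x = ⨆ n, hs n x ∧ g x ≤ h x

/-!
Transport everything to `[0, 1]` through an order isomorphism `EReal ≃o [0, 1]`. There the
infimum `g` of a sequence of continuous functions has functionally closed sets `{φ ≤ g}` for
every continuous `φ`, and dually for the supremum `h`; replacing `g` and `h` by `f₀` on `Y` keeps
this property because `Y` is functionally closed. For such `g ≤ h`, a continuous function lying
between `g - ε` and `h + ε` is moved by at most `ε / 2` into the band between `g - ε / 2` and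
`h + ε / 2`, using a two-step staircase of Urysohn functions of disjoint functionally closed sets.
Iterating gives a uniformly convergent sequence whose limit lies between `g` and `h` and equals
`f₀` on `Y`.
-/

open Set Filter Topology

section

variable {X : Type*} [TopologicalSpace X]

theorem functionallyClosed_le {u v : X → ℝ} (hu : Continuous u) (hv : Continuous v) :
    FunctionallyClosed {x | u x ≤ v x} := by
  refine ⟨fun x => min 1 (max 0 (u x - v x)), by fun_prop,
    fun x => ⟨le_min zero_le_one (le_max_left _ _), min_le_left _ _⟩, ?_⟩
  ext x
  change u x ≤ v x ↔ min 1 (max 0 (u x - v x)) = 0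
  constructor
  · intro h
    rw [max_eq_left (by linarith), min_eq_right zero_le_one]
  · intro h
    by_contra! hlt
    have : (0 : ℝ) < min 1 (max 0 (u x - v x)) :=
      lt_min one_pos (lt_max_of_lt_right (sub_pos.2 hlt))
    linarith

namespace FunctionallyClosed

theorem union {A B : Set X} (hA : FunctionallyClosed A) (hB : FunctionallyClosed B) :
    FunctionallyClosed (A ∪ B) := by
  obtain ⟨α, hα, hα01, rfl⟩ := hA
  obtain ⟨β, hβ, hβ01, rfl⟩ := hB
  refine ⟨α * β, hα.mul hβ, fun x => ⟨mul_nonneg (hα01 x).1 (hβ01 x).1,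
    mul_le_one₀ (hα01 x).2 (hβ01 x).1 (hβ01 x).2⟩, ?_⟩
  ext x
  simp

theorem inter {A B : Set X} (hA : FunctionallyClosed A) (hB : FunctionallyClosed B) :
    FunctionallyClosed (A ∩ B) := by
  obtain ⟨α, hα, hα01, rfl⟩ := hA
  obtain ⟨β, hβ, hβ01, rfl⟩ := hB
  refine ⟨α ⊔ β, hα.sup hβ, fun x => ⟨le_sup_of_le_left (hα01 x).1,
    sup_le (hα01 x).2 (hβ01 x).2⟩, ?_⟩
  ext x
  simp only [mem_inter_iff, mem_preimage, mem_singleton_iff, Pi.sup_apply]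
  constructor
  · rintro ⟨ha, hb⟩; simp [ha, hb]
  · intro h
    exact ⟨le_antisymm (h ▸ le_sup_left) (hα01 x).1, le_antisymm (h ▸ le_sup_right) (hβ01 x).1⟩

theorem iInter {A : ℕ → Set X} (hA : ∀ n, FunctionallyClosed (A n)) :
    FunctionallyClosed (⋂ n, A n) := by
  choose α hα hα01 hαA using hA
  -- weights `2⁻ⁿ` make the series converge uniformly; capping at `1` avoids computing its sum
  set S : X → ℝ := fun x => ∑' n, (1 / 2 : ℝ) ^ n * α n x
  have hterm : ∀ n x, ‖(1 / 2 : ℝ) ^ n * α n x‖ ≤ (1 / 2) ^ n := fun n x => by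
    rw [Real.norm_of_nonneg (mul_nonneg (by positivity) (hα01 n x).1)]
    exact mul_le_of_le_one_right (by positivity) (hα01 n x).2
  have hS : ∀ x, S x = 0 ↔ ∀ n, α n x = 0 := fun x => by
    have hnn : ∀ n, 0 ≤ (1 / 2 : ℝ) ^ n * α n x := fun n => mul_nonneg (by positivity) (hα01 n x).1
    rw [← (summable_geometric_two.of_norm_bounded (fun n => hterm n x)).hasSum_iff,
      hasSum_zero_iff_of_nonneg hnn]
    simp [funext_iff]
  refine ⟨fun x => min 1 (S x), continuous_const.min
    (continuous_tsum (fun n => continuous_const.mul (hα n)) summable_geometric_two hterm),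
    fun x => ⟨le_min zero_le_one (tsum_nonneg fun n => mul_nonneg (by positivity) (hα01 n x).1),
      min_le_left _ _⟩, ?_⟩
  ext x
  simp only [mem_iInter, hαA, mem_preimage, mem_singleton_iff, ← hS]
  exact ⟨fun h => by rw [h, min_eq_right zero_le_one],
    fun h => ((min_eq_iff.1 h).resolve_left fun h => one_ne_zero h.1).1⟩

theorem exists_continuous_zero_one {A B : Set X} (hA : FunctionallyClosed A)
    (hB : FunctionallyClosed B) (hAB : Disjoint A B) :
    ∃ k : X → ℝ, Continuous k ∧ EqOn k 0 A ∧ EqOn k 1 B ∧ ∀ x, k x ∈ Icc (0 : ℝ) 1 := by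
  obtain ⟨α, hα, hα01, rfl⟩ := hA
  obtain ⟨β, hβ, hβ01, rfl⟩ := hB
  have hpos : ∀ x, 0 < α x + β x := fun x => by
    by_contra! h
    have ha : α x = 0 := by linarith [(hα01 x).1, (hβ01 x).1]
    have hb : β x = 0 := by linarith [(hα01 x).1, (hβ01 x).1]
    exact hAB.ne_of_mem (a := x) (b := x) (by simpa using ha) (by simpa using hb) rfl
  refine ⟨fun x => α x / (α x + β x), hα.div (hα.add hβ) fun x => (hpos x).ne', ?_, ?_, ?_⟩
  · intro x (hx : α x = 0)
    simp [hx]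
  · intro x (hx : β x = 0)
    have : α x ≠ 0 := by simpa [hx] using (hpos x).ne'
    simp [hx, this]
  · intro x
    exact ⟨div_nonneg (hα01 x).1 (hpos x).le,
      (div_le_one (hpos x)).2 (le_add_of_nonneg_right (hβ01 x).1)⟩

end FunctionallyClosed

/-- Upper semicontinuity with "closed" strengthened to "functionally closed", tested against
continuous functions rather than constants. -/
def FunctionallyUpperSemicontinuous (g : X → ℝ) : Prop :=
  ∀ φ : X → ℝ, Continuous φ → FunctionallyClosed {x | φ x ≤ g x}

def FunctionallyLowerSemicontinuous (h : X → ℝ) : Prop :=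
  ∀ φ : X → ℝ, Continuous φ → FunctionallyClosed {x | h x ≤ φ x}

theorem functionallyUpperSemicontinuous_ciInf {gs : ℕ → X → ℝ} (hgs : ∀ n, Continuous (gs n))
    (hbdd : ∀ x, BddBelow (range fun n => gs n x)) :
    FunctionallyUpperSemicontinuous fun x => ⨅ n, gs n x := by
  intro φ hφ
  have : {x | φ x ≤ ⨅ n, gs n x} = ⋂ n, {x | φ x ≤ gs n x} := by
    ext x
    simp only [mem_iInter]
    exact le_ciInf_iff (hbdd x)
  rw [this]
  exact .iInter fun n => functionallyClosed_le hφ (hgs n)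

theorem functionallyLowerSemicontinuous_ciSup {hs : ℕ → X → ℝ} (hhs : ∀ n, Continuous (hs n))
    (hbdd : ∀ x, BddAbove (range fun n => hs n x)) :
    FunctionallyLowerSemicontinuous fun x => ⨆ n, hs n x := by
  intro φ hφ
  have : {x | (⨆ n, hs n x) ≤ φ x} = ⋂ n, {x | hs n x ≤ φ x} := by
    ext x
    simp only [mem_iInter]
    exact ciSup_le_iff (hbdd x)
  rw [this]
  exact .iInter fun n => functionallyClosed_le (hhs n) hφ

theorem FunctionallyUpperSemicontinuous.piecewise {g u : X → ℝ} {Y : Set X}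
    [DecidablePred (· ∈ Y)] (hg : FunctionallyUpperSemicontinuous g) (hY : FunctionallyClosed Y)
    (hu : Continuous u) (hgu : ∀ x ∈ Y, g x ≤ u x) :
    FunctionallyUpperSemicontinuous (Y.piecewise u g) := by
  intro φ hφ
  have : {x | φ x ≤ Y.piecewise u g x} = {x | φ x ≤ g x} ∪ (Y ∩ {x | φ x ≤ u x}) := by
    ext x
    by_cases hx : x ∈ Y
    · simp only [mem_ofPred_eq, piecewise_eq_of_mem _ _ _ hx, mem_union, mem_inter_iff, hx,
        true_and]
      exact ⟨Or.inr, fun h => h.elim (fun h => h.trans (hgu x hx)) id⟩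
    · simp [hx]
  rw [this]
  exact (hg φ hφ).union (hY.inter (functionallyClosed_le hφ hu))

theorem FunctionallyLowerSemicontinuous.piecewise {h u : X → ℝ} {Y : Set X}
    [DecidablePred (· ∈ Y)] (hh : FunctionallyLowerSemicontinuous h) (hY : FunctionallyClosed Y)
    (hu : Continuous u) (huh : ∀ x ∈ Y, u x ≤ h x) :
    FunctionallyLowerSemicontinuous (Y.piecewise u h) := by
  intro φ hφ
  have : {x | Y.piecewise u h x ≤ φ x} = {x | h x ≤ φ x} ∪ (Y ∩ {x | u x ≤ φ x}) := by
    ext x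
    by_cases hx : x ∈ Y
    · simp only [mem_ofPred_eq, piecewise_eq_of_mem _ _ _ hx, mem_union, mem_inter_iff, hx,
        true_and]
      exact ⟨Or.inr, fun h => h.elim (fun h => (huh x hx).trans h) id⟩
    · simp [hx]
  rw [this]
  exact (hh φ hφ).union (hY.inter (functionallyClosed_le hu hφ))

theorem FunctionallyUpperSemicontinuous.exists_continuous_halve_error {g h f : X → ℝ} {ε : ℝ}
    (hg : FunctionallyUpperSemicontinuous g) (hh : FunctionallyLowerSemicontinuous h)
    (hgh : g ≤ h) (hf : Continuous f) (hε : 0 < ε)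
    (hfε : ∀ x, g x - ε ≤ f x ∧ f x ≤ h x + ε) :
    ∃ f' : X → ℝ, Continuous f' ∧ (∀ x, |f' x - f x| ≤ ε / 2) ∧
      ∀ x, g x - ε / 2 ≤ f' x ∧ f' x ≤ h x + ε / 2 := by
  set r := ε / 2 with hr_def
  have hr : 0 < r := half_pos hε
  have hsep : ∀ s : ℝ, ∃ k : X → ℝ, Continuous k ∧ (∀ x, h x ≤ f x + (s - r) → k x = 0) ∧
      (∀ x, f x + s ≤ g x → k x = 1) ∧ ∀ x, k x ∈ Icc (0 : ℝ) 1 := fun s => by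
    refine (hh (fun x => f x + (s - r)) (hf.add continuous_const)).exists_continuous_zero_one
      (hg (fun x => f x + s) (hf.add continuous_const)) (disjoint_left.2 fun x hx₁ hx₂ => ?_)
    have : h x ≤ f x + (s - r) := hx₁
    have : f x + s ≤ g x := hx₂
    linarith [hgh x]
  obtain ⟨k₀, hk₀, hk₀h, hk₀g, hk₀01⟩ := hsep 0
  obtain ⟨k₁, hk₁, hk₁h, hk₁g, hk₁01⟩ := hsep r
  refine ⟨fun x => f x + r * (k₀ x + k₁ x - 1), by fun_prop, fun x => ?_, fun x => ?_⟩ <;>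
    obtain ⟨h₀0, h₀1⟩ := hk₀01 x <;> obtain ⟨h₁0, h₁1⟩ := hk₁01 x <;> dsimp only
  · rw [add_sub_cancel_left, abs_le]
    constructor <;> nlinarith
  constructor
  · by_cases hx₁ : f x + r ≤ g x
    · rw [hk₀g x (by linarith), hk₁g x hx₁]; linarith [(hfε x).1, hr_def]
    by_cases hx₀ : f x ≤ g x
    · rw [hk₀g x (by linarith)]; nlinarith
    · nlinarith
  · by_cases hx₀ : h x + r ≤ f x
    · rw [hk₀h x (by linarith), hk₁h x (by linarith)]; linarith [(hfε x).2, hr_def]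
    by_cases hx₁ : h x ≤ f x
    · rw [hk₁h x (by linarith)]; nlinarith
    · nlinarith

theorem exists_continuous_tendsto_of_abs_sub_le {u : ℕ → X → ℝ} {c : ℝ}
    (hu : ∀ k, Continuous (u k)) (hle : ∀ k x, |u (k + 1) x - u k x| ≤ c / 2 ^ k) :
    ∃ F : X → ℝ, Continuous F ∧ ∀ x, Tendsto (fun k => u k x) atTop (𝓝 (F x)) := by
  have hsum : Summable fun k : ℕ => c / 2 ^ k := by
    simpa [div_eq_mul_inv] using summable_geometric_two.mul_left c
  refine ⟨fun x => u 0 x + ∑' k, (u (k + 1) x - u k x),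
    (hu 0).add (continuous_tsum (fun k => (hu (k + 1)).sub (hu k)) hsum hle), fun x => ?_⟩
  have htel := ((hsum.of_norm_bounded fun k => hle k x).hasSum.tendsto_sum_nat).const_add (u 0 x)
  simp_rw [Finset.sum_range_sub (fun k => u k x), add_sub_cancel] at htel
  exact htel

theorem exists_continuous_between {g h : X → ℝ} (hg : FunctionallyUpperSemicontinuous g)
    (hh : FunctionallyLowerSemicontinuous h) (hgh : g ≤ h) (hg_bdd : BddAbove (range g))
    (hh_bdd : BddBelow (range h)) :
    ∃ f : X → ℝ, Continuous f ∧ g ≤ f ∧ f ≤ h := by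
  obtain ⟨b, hb⟩ := hg_bdd
  obtain ⟨a, ha⟩ := hh_bdd
  set c := max (b - a) 1
  let Approx (k : ℕ) (f : X → ℝ) : Prop :=
    Continuous f ∧ ∀ x, g x - c / 2 ^ k ≤ f x ∧ f x ≤ h x + c / 2 ^ k
  have h0 : Approx 0 fun _ => b := by
    refine ⟨continuous_const, fun x => ?_⟩
    have hgx : g x ≤ b := hb (mem_range_self x)
    have hhx : a ≤ h x := ha (mem_range_self x)
    rw [pow_zero, div_one]
    constructor <;> linarith [le_max_left (b - a) 1, le_max_right (b - a) 1]
  have hstep : ∀ k (f : {f // Approx k f}), ∃ f' : {f // Approx (k + 1) f},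
      ∀ x, |f'.1 x - f.1 x| ≤ c / 2 ^ k := fun k ⟨f, hf, hfk⟩ => by
    obtain ⟨f', hf', hclose, hbounds⟩ := hg.exists_continuous_halve_error hh hgh hf
      (by positivity) hfk
    rw [div_div, ← pow_succ] at hbounds
    exact ⟨⟨f', hf', hbounds⟩, fun x => (hclose x).trans (half_le_self (by positivity))⟩
  choose next hnext using hstep
  let u (k : ℕ) : {f // Approx k f} := Nat.rec ⟨_, h0⟩ next k
  obtain ⟨F, hF, hlim⟩ := exists_continuous_tendsto_of_abs_sub_le (u := fun k => (u k).1)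
    (fun k => (u k).2.1) (fun k => hnext k (u k))
  have hc : Tendsto (fun k : ℕ => c / 2 ^ k) atTop (𝓝 0) :=
    tendsto_const_nhds.div_atTop (tendsto_pow_atTop_atTop_of_one_lt one_lt_two)
  refine ⟨F, hF, fun x => ?_, fun x => ?_⟩
  · refine ge_of_tendsto' (by simpa using (hlim x).add hc) fun k => ?_
    linarith [((u k).2.2 x).1]
  · refine le_of_tendsto' (by simpa using (hlim x).sub hc) fun k => ?_
    linarith [((u k).2.2 x).2]

noncomputable def erealOrderIsoIcc : EReal ≃o Icc (0 : ℝ) 1 :=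
  ENNReal.logOrderIso.symm.trans ENNReal.orderIsoUnitIntervalBirational

theorem continuous_coe_erealOrderIsoIcc : Continuous fun y => (erealOrderIsoIcc y : ℝ) :=
  continuous_subtype_val.comp erealOrderIsoIcc.continuous

theorem monotone_coe_erealOrderIsoIcc : Monotone fun y => (erealOrderIsoIcc y : ℝ) :=
  fun _ _ hab => erealOrderIsoIcc.monotone hab

theorem functionallyUpperSemicontinuous_coe_erealOrderIsoIcc_iInf {g : X → EReal}
    {gs : ℕ → X → EReal} (hgs : ∀ n, Continuous (gs n)) (hg : ∀ x, g x = ⨅ n, gs n x) :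
    FunctionallyUpperSemicontinuous fun x => (erealOrderIsoIcc (g x) : ℝ) := by
  have : (fun x => (erealOrderIsoIcc (g x) : ℝ)) = fun x => ⨅ n, (erealOrderIsoIcc (gs n x) : ℝ) :=
    funext fun x => hg x ▸ monotone_coe_erealOrderIsoIcc.map_ciInf_of_continuousAt
      continuous_coe_erealOrderIsoIcc.continuousAt
  rw [this]
  exact functionallyUpperSemicontinuous_ciInf
    (fun n => continuous_coe_erealOrderIsoIcc.comp (hgs n))
    fun x => ⟨0, forall_mem_range.2 fun n => (erealOrderIsoIcc (gs n x)).2.1⟩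

theorem functionallyLowerSemicontinuous_coe_erealOrderIsoIcc_iSup {h : X → EReal}
    {hs : ℕ → X → EReal} (hhs : ∀ n, Continuous (hs n)) (hh : ∀ x, h x = ⨆ n, hs n x) :
    FunctionallyLowerSemicontinuous fun x => (erealOrderIsoIcc (h x) : ℝ) := by
  have : (fun x => (erealOrderIsoIcc (h x) : ℝ)) = fun x => ⨆ n, (erealOrderIsoIcc (hs n x) : ℝ) :=
    funext fun x => hh x ▸ monotone_coe_erealOrderIsoIcc.map_ciSup_of_continuousAt
      continuous_coe_erealOrderIsoIcc.continuousAt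
  rw [this]
  exact functionallyLowerSemicontinuous_ciSup
    (fun n => continuous_coe_erealOrderIsoIcc.comp (hhs n))
    fun x => ⟨1, forall_mem_range.2 fun n => (erealOrderIsoIcc (hs n x)).2.2⟩

theorem exists_continuous_ereal_between_eqOn {g h f₀ : X → EReal} {Y : Set X}
    (hg : FunctionallyUpperSemicontinuous fun x => (erealOrderIsoIcc (g x) : ℝ))
    (hh : FunctionallyLowerSemicontinuous fun x => (erealOrderIsoIcc (h x) : ℝ)) (hgh : g ≤ h)
    (hY : FunctionallyClosed Y) (hf₀ : Continuous f₀) (hbound : ∀ y ∈ Y, g y ≤ f₀ y ∧ f₀ y ≤ h y) :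
    ∃ f : X → EReal, Continuous f ∧ EqOn f f₀ Y ∧ g ≤ f ∧ f ≤ h := by
  classical
  set E := erealOrderIsoIcc
  set G := Y.piecewise (fun x => (E (f₀ x) : ℝ)) fun x => (E (g x) : ℝ)
  set H := Y.piecewise (fun x => (E (f₀ x) : ℝ)) fun x => (E (h x) : ℝ)
  have hcont : Continuous fun x => (E (f₀ x) : ℝ) := continuous_coe_erealOrderIsoIcc.comp hf₀
  have hgG : ∀ x, (E (g x) : ℝ) ≤ G x := le_piecewise
    (fun x hx => monotone_coe_erealOrderIsoIcc (hbound x hx).1) fun _ _ => le_rfl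
  have hHh : ∀ x, H x ≤ E (h x) := piecewise_le
    (fun x hx => monotone_coe_erealOrderIsoIcc (hbound x hx).2) fun _ _ => le_rfl
  have hGH : G ≤ H :=
    piecewise_mono (fun _ _ => le_rfl) fun x _ => monotone_coe_erealOrderIsoIcc (hgh x)
  obtain ⟨F, hF, hGF, hFH⟩ := exists_continuous_between
    (hg.piecewise hY hcont fun x hx => monotone_coe_erealOrderIsoIcc (hbound x hx).1)
    (hh.piecewise hY hcont fun x hx => monotone_coe_erealOrderIsoIcc (hbound x hx).2) hGH
    ⟨1, forall_mem_range.2 fun x => ((hGH x).trans (hHh x)).trans (E (h x)).2.2⟩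
    ⟨0, forall_mem_range.2 fun x => (E (g x)).2.1.trans ((hgG x).trans (hGH x))⟩
  have hF01 : ∀ x, F x ∈ Icc (0 : ℝ) 1 := fun x =>
    ⟨(E (g x)).2.1.trans ((hgG x).trans (hGF x)), ((hFH x).trans (hHh x)).trans (E (h x)).2.2⟩
  refine ⟨fun x => E.symm ⟨F x, hF01 x⟩, E.symm.continuous.comp (hF.subtype_mk hF01),
    fun y hy => E.symm_apply_eq.2 (Subtype.ext ?_), fun x => E.le_symm_apply.2 ?_,
    fun x => E.symm_apply_le.2 ?_⟩
  · have hGy : G y = E (f₀ y) := piecewise_eq_of_mem _ _ _ hy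
    have hHy : H y = E (f₀ y) := piecewise_eq_of_mem _ _ _ hy
    exact le_antisymm (hHy ▸ hFH y) (hGy ▸ hGF y)
  · exact Subtype.coe_le_coe.1 ((hgG x).trans (hGF x))
  · exact Subtype.coe_le_coe.1 ((hFH x).trans (hHh x))

end

theorem stmt1 {X : Type*} [TopologicalSpace X]
    (Y : Set X) (hY : FunctionallyClosed Y)
    (g h : X → EReal) (hgh : CountablePairOfHahn g h)
    (f₀ : X → EReal) (hf₀ : Continuous f₀)
    (hbound : ∀ y ∈ Y, g y ≤ f₀ y ∧ f₀ y ≤ h y) :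
    ∃ f : X → EReal, Continuous f ∧ (∀ y ∈ Y, f y = f₀ y) ∧
      ∀ x, g x ≤ f x ∧ f x ≤ h x := by
  obtain ⟨gs, hs, hgs, hhs, hHahn⟩ := hgh
  obtain ⟨f, hf, hfY, hgf, hfh⟩ := exists_continuous_ereal_between_eqOn
    (functionallyUpperSemicontinuous_coe_erealOrderIsoIcc_iInf hgs fun x => (hHahn x).1)
    (functionallyLowerSemicontinuous_coe_erealOrderIsoIcc_iSup hhs fun x => (hHahn x).2.1)
    (fun x => (hHahn x).2.2) hY hf₀ hbound
  exact ⟨f, hf, hfY, fun x => ⟨hgf x, hfh x⟩⟩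
end

section
/- Let X be a perfectly normal space, Y a closed subspace of X, (g,h) a pair of Hahn on X, and f₀ : Y → ℝ̄ a continuous function such that g(y) ≤ f₀(y) ≤ h(y) for every y ∈ Y. Then there exists a continuous function f : X → ℝ̄ such that f(y) = f₀(y) for every y ∈ Y and g(x) ≤ f(x) ≤ h(x) for every x ∈ X. -/
/-!
Katětov–Tong insertion. Between an upper semicontinuous `g ≤ 1` and a lower semicontinuous
`h ≥ 0` on a normal space, Urysohn functions `u_k` equal to `1` on `{k/n ≤ g}` and to `0` on
`{h ≤ (k-1)/n}` give the staircase `max_k (k/n) u_k`, which lies between `g - 1/n` and `h + 1/n`.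
Repeating this with the bounds cut down to a `2δ`-band around the previous approximation produces
a uniformly Cauchy sequence whose limit is continuous and lies between `g` and `h`; the
`EReal`-valued case follows through an order isomorphism `EReal ≃o [0, 1]`.

For the extension, replace `g` by `g ⊔ lo` and `h` by `h ⊓ hi`, where `lo` and `hi` are `f₀` on
`Y` and `⊥`, resp. `⊤`, off `Y`. Since `Y` is closed these are still upper, resp. lower,
semicontinuous, and any continuous function inserted between them agrees with `f₀` on `Y`.
-/

open Set Filter Topology BoundedContinuousFunction

section

variable {X : Type*}

def IsApproxBetween (g h : X → ℝ) (δ : ℝ) (v : X → ℝ) : Prop :=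
  ∀ x, v x ∈ Icc (0 : ℝ) 1 ∧ g x - δ ≤ v x ∧ v x ≤ h x + δ

theorem IsApproxBetween.mono {g h v : X → ℝ} {δ ε : ℝ} (hv : IsApproxBetween g h δ v)
    (hδε : δ ≤ ε) : IsApproxBetween g h ε v := fun x =>
  ⟨(hv x).1, by linarith [(hv x).2.1], by linarith [(hv x).2.2]⟩

variable [TopologicalSpace X] [NormalSpace X] {g h : X → ℝ}

theorem exists_isApproxBetween_inv_natCast (hg : UpperSemicontinuous g)
    (hh : LowerSemicontinuous h) (hgh : g ≤ h) (hg1 : ∀ x, g x ≤ 1) (hh0 : ∀ x, 0 ≤ h x)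
    {n : ℕ} (hn : 0 < n) : ∃ v : C(X, ℝ), IsApproxBetween g h (1 / n) v := by
  have hn' : (0 : ℝ) < n := Nat.cast_pos.2 hn
  have hsep (k : ℕ) : ∃ u : C(X, ℝ), EqOn u 0 (h ⁻¹' Iic ((k - 1) / n)) ∧
      EqOn u 1 (g ⁻¹' Ici (k / n)) ∧ ∀ x, u x ∈ Icc (0 : ℝ) 1 := by
    refine exists_continuous_zero_one_of_isClosed (hh.isClosed_preimage _)
      (hg.isClosed_preimage _) (disjoint_left.2 fun x hxh hxg => ?_)
    have : (k : ℝ) / n ≤ (k - 1) / n := (mem_Ici.1 hxg).trans ((hgh x).trans hxh)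
    linarith [(div_le_div_iff_of_pos_right hn').1 this]
  choose u hu0 hu1 hu01 using hsep
  refine ⟨(Finset.range (n + 1)).sup' Finset.nonempty_range_add_one
    fun k => ((k : ℝ) / n) • u k, fun x => ?_⟩
  simp only [ContinuousMap.sup'_apply, ContinuousMap.smul_apply, smul_eq_mul]
  have hnonneg : (0 : ℝ) ≤ (Finset.range (n + 1)).sup' Finset.nonempty_range_add_one
      fun k => (k : ℝ) / n * u k x :=
    Finset.le_sup'_of_le _ (Finset.mem_range.2 n.succ_pos) (by simp)
  refine ⟨⟨hnonneg, Finset.sup'_le _ _ fun k hk => ?_⟩, ?_, Finset.sup'_le _ _ fun k _ => ?_⟩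
  · have hk : (k : ℝ) / n ≤ 1 := by
      rw [div_le_one hn']; exact_mod_cast Nat.lt_succ_iff.1 (Finset.mem_range.1 hk)
    exact mul_le_one₀ hk (hu01 k x).1 (hu01 k x).2
  · rcases le_or_gt (g x) 0 with hgx | hgx
    · have : 0 < 1 / (n : ℝ) := by positivity
      linarith
    set k := ⌊n * g x⌋₊
    have hkg : (k : ℝ) / n ≤ g x := by
      rw [div_le_iff₀ hn', mul_comm]; exact Nat.floor_le (by positivity)
    have hkn : k ∈ Finset.range (n + 1) := by
      refine Finset.mem_range.2 (Nat.lt_succ_of_le (Nat.floor_le_of_le ?_))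
      nlinarith [hg1 x]
    refine le_trans ?_ (Finset.le_sup' _ hkn)
    rw [hu1 k hkg, Pi.one_apply, mul_one, sub_le_iff_le_add, ← add_div,
      le_div_iff₀ hn', mul_comm]
    exact (Nat.lt_floor_add_one _).le
  · rcases le_or_gt (h x) ((k - 1) / n) with hhx | hhx
    · rw [hu0 k hhx, Pi.zero_apply, mul_zero]
      linarith [hh0 x, (by positivity : 0 ≤ 1 / (n : ℝ))]
    · calc (k : ℝ) / n * u k x ≤ k / n := mul_le_of_le_one_right (by positivity) (hu01 k x).2
        _ ≤ h x + 1 / n := by rw [sub_div] at hhx; linarith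

theorem exists_bcf_isApproxBetween (hg : UpperSemicontinuous g) (hh : LowerSemicontinuous h)
    (hgh : g ≤ h) (hg1 : ∀ x, g x ≤ 1) (hh0 : ∀ x, 0 ≤ h x) {ε : ℝ} (hε : 0 < ε) :
    ∃ v : X →ᵇ ℝ, IsApproxBetween g h ε v := by
  obtain ⟨n, hn⟩ := exists_nat_one_div_lt hε
  obtain ⟨v, hv⟩ := exists_isApproxBetween_inv_natCast hg hh hgh hg1 hh0 n.succ_pos
  exact ⟨⟨v, 1, fun x y => Real.dist_le_of_mem_Icc_01 (hv x).1 (hv y).1⟩,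
    hv.mono (by push_cast; exact hn.le)⟩

theorem IsApproxBetween.exists_bcf_dist_le (hg : UpperSemicontinuous g)
    (hh : LowerSemicontinuous h) (hgh : g ≤ h) (hg1 : ∀ x, g x ≤ 1) (hh0 : ∀ x, 0 ≤ h x)
    {δ : ℝ} (hδ : 0 < δ) {v : X →ᵇ ℝ} (hv : IsApproxBetween g h δ v) :
    ∃ w : X →ᵇ ℝ, IsApproxBetween g h (δ / 2) w ∧ dist v w ≤ 3 * δ := by
  obtain ⟨w, hw⟩ := exists_bcf_isApproxBetween
    (g := fun x => g x ⊔ (v x - 2 * δ)) (h := fun x => h x ⊓ (v x + 2 * δ))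
    (hg.sup (v.continuous.sub continuous_const).upperSemicontinuous)
    (hh.inf (v.continuous.add continuous_const).lowerSemicontinuous)
    (fun x => sup_le (le_inf (hgh x) (by linarith [(hv x).2.1]))
      (le_inf (by linarith [(hv x).2.2]) (by linarith)))
    (fun x => sup_le (hg1 x) (by linarith [(hv x).1.2]))
    (fun x => le_inf (hh0 x) (by linarith [(hv x).1.1])) (half_pos hδ)
  refine ⟨w, fun x => ⟨(hw x).1, ?_, ?_⟩, (BoundedContinuousFunction.dist_le (by positivity)).2
    fun x => abs_le.2 ⟨?_, ?_⟩⟩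
  · linarith [(hw x).2.1, le_sup_left (a := g x) (b := v x - 2 * δ)]
  · linarith [(hw x).2.2, inf_le_left (a := h x) (b := v x + 2 * δ)]
  · linarith [(hw x).2.2, inf_le_right (a := h x) (b := v x + 2 * δ)]
  · linarith [(hw x).2.1, le_sup_right (a := g x) (b := v x - 2 * δ)]

theorem exists_bcf_isApproxBetween_zero (hg : UpperSemicontinuous g)
    (hh : LowerSemicontinuous h) (hgh : g ≤ h) (hg1 : ∀ x, g x ≤ 1) (hh0 : ∀ x, 0 ≤ h x) :
    ∃ f : X →ᵇ ℝ, IsApproxBetween g h 0 f := by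
  choose! W hW hWdist using fun (n : ℕ) (v : X →ᵇ ℝ) =>
    IsApproxBetween.exists_bcf_dist_le hg hh hgh hg1 hh0 (v := v) (pow_pos one_half_pos n)
  obtain ⟨v₀, hv₀⟩ := exists_bcf_isApproxBetween hg hh hgh hg1 hh0 one_pos
  let u (n : ℕ) : X →ᵇ ℝ := Nat.rec v₀ W n
  have hu (n : ℕ) : IsApproxBetween g h ((1 / 2) ^ n) (u n) := by
    induction n with
    | zero => simpa [u] using hv₀
    | succ n ih => simpa [pow_succ, div_eq_mul_inv] using hW n (u n) ih
  obtain ⟨F, hF⟩ := cauchySeq_tendsto_of_complete <|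
    cauchySeq_of_le_geometric (1 / 2) 3 (by norm_num) fun n => hWdist n (u n) (hu n)
  have hδ : Tendsto (fun n => (1 / 2 : ℝ) ^ n) atTop (𝓝 0) :=
    tendsto_pow_atTop_nhds_zero_of_lt_one (by norm_num) (by norm_num)
  refine ⟨F, fun x => ?_⟩
  have hx : Tendsto (fun n => u n x) atTop (𝓝 (F x)) :=
    ((continuous_eval_const x).tendsto F).comp hF
  refine ⟨isClosed_Icc.mem_of_tendsto hx (Eventually.of_forall fun n => (hu n x).1), ?_, ?_⟩
  · exact le_of_tendsto_of_tendsto' (tendsto_const_nhds.sub hδ) hx fun n => (hu n x).2.1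
  · exact le_of_tendsto_of_tendsto' hx (tendsto_const_nhds.add hδ) fun n => (hu n x).2.2

end

theorem IsClosed.upperSemicontinuous_dite_bot {α γ : Type*} [TopologicalSpace α] [LinearOrder γ]
    [OrderBot γ] [TopologicalSpace γ] [ClosedIciTopology γ] {Y : Set α} [DecidablePred (· ∈ Y)]
    (hY : IsClosed Y) {f : Y → γ} (hf : Continuous f) :
    UpperSemicontinuous fun x => if hx : x ∈ Y then f ⟨x, hx⟩ else ⊥ := by
  rw [upperSemicontinuous_iff_isClosed_preimage]
  intro c
  rcases eq_bot_or_bot_lt c with rfl | hc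
  · simp
  · convert hY.isClosedEmbedding_subtypeVal.isClosedMap _ ((isClosed_Ici (a := c)).preimage hf)
    ext x
    by_cases hx : x ∈ Y <;> simp [hx, hc.not_ge]

theorem IsClosed.lowerSemicontinuous_dite_top {α γ : Type*} [TopologicalSpace α] [LinearOrder γ]
    [OrderTop γ] [TopologicalSpace γ] [ClosedIicTopology γ] {Y : Set α} [DecidablePred (· ∈ Y)]
    (hY : IsClosed Y) {f : Y → γ} (hf : Continuous f) :
    LowerSemicontinuous fun x => if hx : x ∈ Y then f ⟨x, hx⟩ else ⊤ :=
  hY.upperSemicontinuous_dite_bot (γ := γᵒᵈ) hf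

theorem EReal.exists_continuous_between {X : Type*} [TopologicalSpace X] [NormalSpace X]
    {g h : X → EReal} (hg : UpperSemicontinuous g) (hh : LowerSemicontinuous h) (hgh : g ≤ h) :
    ∃ f : X → EReal, Continuous f ∧ g ≤ f ∧ f ≤ h := by
  let e : EReal ≃o Icc (0 : ℝ) 1 :=
    EReal.expOrderIso.trans ENNReal.orderIsoUnitIntervalBirational
  let ψ (a : EReal) : ℝ := e a
  have hψ : Continuous ψ := continuous_subtype_val.comp e.continuous
  have hψ_mono : Monotone ψ := fun a b hab => e.monotone hab
  obtain ⟨F, hF⟩ := exists_bcf_isApproxBetween_zero (hψ.comp_upperSemicontinuous hg hψ_mono)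
    (hψ.comp_lowerSemicontinuous hh hψ_mono) (fun x => hψ_mono (hgh x))
    (fun x => (e (g x)).2.2) (fun x => (e (h x)).2.1)
  refine ⟨fun x => e.symm ⟨F x, (hF x).1⟩, e.symm.continuous.comp (F.continuous.subtype_mk _),
    fun x => e.le_symm_apply.2 ?_, fun x => e.symm_apply_le.2 ?_⟩
  · exact Subtype.coe_le_coe.1 (by simpa using (hF x).2.1)
  · exact Subtype.coe_le_coe.1 (by simpa using (hF x).2.2)

theorem stmt2 {X : Type*} [TopologicalSpace X] [PerfectlyNormalSpace X]
    (Y : Set X) (hY : IsClosed Y)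
    (g h : X → EReal) (hle : g ≤ h)
    (hg : UpperSemicontinuous g) (hh : LowerSemicontinuous h)
    (f₀ : Y → EReal) (hf₀ : Continuous f₀)
    (hbound : ∀ y : Y, g y ≤ f₀ y ∧ f₀ y ≤ h y) :
    ∃ f : X → EReal, Continuous f ∧ (∀ y : Y, f y = f₀ y) ∧
      ∀ x, g x ≤ f x ∧ f x ≤ h x := by
  classical
  let lo (x : X) : EReal := if hx : x ∈ Y then f₀ ⟨x, hx⟩ else ⊥
  let hi (x : X) : EReal := if hx : x ∈ Y then f₀ ⟨x, hx⟩ else ⊤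
  have hlo (y : Y) : lo y = f₀ y := dif_pos y.2
  have hhi (y : Y) : hi y = f₀ y := dif_pos y.2
  have hlo_hi (x : X) : g x ⊔ lo x ≤ h x ⊓ hi x := by
    by_cases hx : x ∈ Y
    · simp [lo, hi, hx, hbound ⟨x, hx⟩]
    · simp [lo, hi, hx, hle x]
  obtain ⟨f, hf, hgf, hfh⟩ := EReal.exists_continuous_between
    (hg.sup (hY.upperSemicontinuous_dite_bot hf₀)) (hh.inf (hY.lowerSemicontinuous_dite_top hf₀))
    hlo_hi
  refine ⟨f, hf, fun y => le_antisymm ?_ ?_, fun x => ⟨le_sup_left.trans (hgf x),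
    (hfh x).trans inf_le_left⟩⟩
  · exact ((hfh y).trans inf_le_right).trans_eq (hhi y)
  · exact (hlo y).symm.trans_le (le_sup_right.trans (hgf y))
end

section
/- Let X be a topological space and g,h : X → ℝ̄. If (g,h) is a countable pair of Hahn on X and both g and h are functions of the first stable Baire class, then (g,h) is a stable pair of Hahn on X. -/
/-- A function is of the *first stable Baire class* if it is the stable (i.e. pointwise
eventually constant) limit of a sequence of continuous functions. -/
def FirstStableBaireClass {X Y : Type*} [TopologicalSpace X] [TopologicalSpace Y]
    (f : X → Y) : Prop :=
  ∃ u : ℕ → X → Y, (∀ n, Continuous (u n)) ∧ ∀ x, ∃ n, ∀ k, n ≤ k → u k x = f x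

open Filter Topology Set

section LatticeValued

variable {X β : Type*} [TopologicalSpace X]

theorem iInf_eq_finset_range_inf_of_eq_top [CompleteLattice β] {a : ℕ → β} {N : ℕ}
    (h : ∀ n, N ≤ n → a n = ⊤) : ⨅ n, a n = (Finset.range N).inf a := by
  refine le_antisymm (Finset.le_inf fun n _ => iInf_le a n) (le_iInf fun n => ?_)
  rcases lt_or_ge n N with hn | hn
  · exact Finset.inf_le (Finset.mem_range.2 hn)
  · simp [h n hn]

variable [TopologicalSpace β]

theorem lowerSemicontinuousAt_of_eventually_le [LinearOrder β] [OrderTopology β] {f φ : X → β}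
    {x : X} (hφ : ContinuousAt φ x) (hx : φ x = f x) (hle : ∀ᶠ y in 𝓝 x, φ y ≤ f y) :
    LowerSemicontinuousAt f x := fun b hb =>
  ((hφ.lowerSemicontinuousAt b (hx.symm ▸ hb : b < φ x)).and hle).mono fun _ h => h.1.trans_le h.2

theorem continuous_iInf_of_forall_exists_le [CompleteLinearOrder β] [OrderTopology β]
    {ι : Sort*} {A : ι → X → β} (hA : ∀ n, Continuous (A n))
    (h : ∀ x, ∃ φ : X → β, Continuous φ ∧ φ x = ⨅ n, A n x ∧ ∀ᶠ y in 𝓝 x, φ y ≤ ⨅ n, A n y) :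
    Continuous fun x => ⨅ n, A n x := by
  refine continuous_iff_lower_upperSemicontinuous.2
    ⟨fun x => ?_, upperSemicontinuous_iInf fun n => (hA n).upperSemicontinuous⟩
  obtain ⟨φ, hφ, hφx, hφle⟩ := h x
  exact lowerSemicontinuousAt_of_eventually_le hφ.continuousAt hφx hφle

theorem exists_continuous_between_s4 [CompleteLinearOrder β] [OrderTopology β] {g h : X → β}
    {w W : ℕ → X → β} (hw : ∀ k, Continuous (w k)) (hW : ∀ k, Continuous (W k))
    (hgw : ∀ k x, g x ≤ w k x) (hWh : ∀ k x, W k x ≤ h x)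
    (hw_eq : ∀ x, ∀ᶠ k in atTop, w k x = g x) (hW_eq : ∀ x, ∀ᶠ k in atTop, W k x = h x)
    (hgh : ∀ x, g x ≤ h x) :
    ∃ q : X → β, Continuous q ∧ (∀ x, g x ≤ q x) ∧ ∀ x, q x ≤ h x := by
  set M : ℕ → X → β := fun k x => partialSups (W · x) k
  have hM : ∀ k, Continuous (M k) := fun k => Continuous.partialSups_apply fun j _ => hW j
  have hMh : ∀ k x, M k x ≤ h x := fun k x => partialSups_le _ _ _ fun j _ => hWh j x
  have hM_eq : ∀ x, ∀ᶠ k in atTop, M k x = h x := fun x =>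
    (hW_eq x).mono fun k hk => le_antisymm (hMh k x) (hk ▸ le_partialSups (W · x) k)
  set a : ℕ → X → β := fun k x => max (w k x) (M k x)
  have key : ∀ x, ∃ K, a K x = h x ∧ M K x = h x := fun x => by
    obtain ⟨K, hwK, hMK⟩ := ((hw_eq x).and (hM_eq x)).exists
    exact ⟨K, by simp only [a, hwK, hMK, max_eq_right (hgh x)], hMK⟩
  refine ⟨fun x => ⨅ k, a k x, continuous_iInf_of_forall_exists_le
      (fun k => (hw k).max (hM k)) fun x => ?_,
    fun x => le_iInf fun k => (hgw k x).trans (le_max_left _ _),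
    fun x => (key x).elim fun K hK => (iInf_le _ K).trans hK.1.le⟩
  obtain ⟨K, haK, hMK⟩ := key x
  -- `M` is monotone, so `M K` bounds every `a k` with `k ≥ K` from below
  have le_a : ∀ y k, min ((Finset.range K).inf (a · y)) (M K y) ≤ a k y := fun y k => by
    rcases lt_or_ge k K with hk | hk
    · exact (min_le_left _ _).trans (Finset.inf_le (Finset.mem_range.2 hk))
    · exact (min_le_right _ _).trans (((partialSups _).monotone hk).trans (le_max_right _ _))
  refine ⟨fun y => min ((Finset.range K).inf (a · y)) (M K y),
    (Continuous.finset_inf_apply fun k _ => (hw k).max (hM k)).min (hM K),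
    le_antisymm (le_iInf (le_a x)) ?_, .of_forall fun y => le_iInf (le_a y)⟩
  exact le_min (Finset.le_inf fun k _ => iInf_le _ k) ((iInf_le _ K).trans (haK.trans hMK.symm).le)

end LatticeValued

theorem exists_continuous_eq_zero_iff_forall_eq {X Y : Type*} [TopologicalSpace X]
    [TopologicalSpace Y] [TopologicalSpace.MetrizableSpace Y] {f g : ℕ → X → Y}
    (hf : ∀ n, Continuous (f n)) (hg : ∀ n, Continuous (g n)) :
    ∃ s : X → ℝ, Continuous s ∧ (∀ x, 0 ≤ s x) ∧ ∀ x, s x = 0 ↔ ∀ n, f n x = g n x := by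
  let := TopologicalSpace.metrizableSpaceMetric Y
  set t : ℕ → X → ℝ := fun n x => (1 / 2 : ℝ) ^ n * min 1 (dist (f n x) (g n x))
  have t_nonneg : ∀ n x, 0 ≤ t n x := fun n x => by positivity
  have t_le : ∀ n x, t n x ≤ (1 / 2 : ℝ) ^ n := fun n x =>
    mul_le_of_le_one_right (by positivity) (min_le_left _ _)
  have t_summable : ∀ x, Summable (t · x) := fun x =>
    .of_nonneg_of_le (t_nonneg · x) (t_le · x) summable_geometric_two
  refine ⟨fun x => ∑' n, t n x, continuous_tsum (fun n => by fun_prop) summable_geometric_two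
    fun n x => (Real.norm_of_nonneg (t_nonneg n x)).trans_le (t_le n x),
    fun x => tsum_nonneg (t_nonneg · x), fun x => ?_⟩
  rw [← (t_summable x).hasSum_iff, hasSum_zero_iff_of_nonneg (t_nonneg · x), funext_iff]
  exact forall_congr' fun n => by simp +contextual [t, min_eq_iff]

section ERealValued

variable {X : Type*} [TopologicalSpace X]

noncomputable def botTopRamp (t : ℝ) : EReal := ENNReal.log ((ENNReal.ofReal (1 - t))⁻¹ - 1)

theorem continuous_botTopRamp : Continuous botTopRamp :=
  ENNReal.continuous_log.comp <| (ENNReal.continuous_sub_right 1).comp <|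
    (ENNReal.continuous_ofReal.comp (continuous_const.sub continuous_id)).inv

@[simp]
theorem botTopRamp_zero : botTopRamp 0 = ⊥ := by
  simp [botTopRamp]

theorem botTopRamp_of_one_le {t : ℝ} (ht : 1 ≤ t) : botTopRamp t = ⊤ := by
  simp [botTopRamp, ENNReal.ofReal_eq_zero.2 (sub_nonpos.2 ht)]

theorem continuous_iInf_max_botTopRamp {c : ℕ → X → EReal} {s : X → ℝ} {v : X → EReal}
    (hc : ∀ n, Continuous (c n)) (hs : Continuous s) (hs0 : ∀ x, 0 ≤ s x) (hv : Continuous v)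
    (hvc : ∀ n x, v x ≤ c n x) (hzero : ∀ x, s x = 0 → ⨅ n, c n x = v x) :
    Continuous fun x => ⨅ n : ℕ, max (c n x) (botTopRamp (n * s x)) := by
  refine continuous_iInf_of_forall_exists_le (fun n =>
    (hc n).max (continuous_botTopRamp.comp (continuous_const.mul hs))) fun x => ?_
  rcases (hs0 x).eq_or_lt with hx | hx
  · refine ⟨v, hv, ?_, .of_forall fun y => le_iInf fun n => (hvc n y).trans (le_max_left _ _)⟩
    simp [← hx, hzero x hx.symm]
  · -- from `N` on, the terms are `⊤` on the neighbourhood `{y | s x / 2 < s y}` of `x`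
    set N := ⌈2 / s x⌉₊
    have htop : ∀ y, s x / 2 < s y → ∀ n, N ≤ n → max (c n y) (botTopRamp (n * s y)) = ⊤ := by
      intro y hy n hn
      rw [botTopRamp_of_one_le, max_top_right]
      calc (1 : ℝ) = 2 / s x * (s x / 2) := by field_simp
        _ ≤ n * s y := mul_le_mul (Nat.ceil_le.1 hn) hy.le (by positivity) (by positivity)
    have hU : ∀ᶠ y in 𝓝 x, s x / 2 < s y :=
      hs.continuousAt.eventually (eventually_gt_nhds (half_lt_self hx))
    refine ⟨fun y => (Finset.range N).inf fun n => max (c n y) (botTopRamp (n * s y)),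
      Continuous.finset_inf_apply fun n _ =>
        (hc n).max (continuous_botTopRamp.comp (continuous_const.mul hs)),
      (iInf_eq_finset_range_inf_of_eq_top (htop x (half_lt_self hx))).symm,
      hU.mono fun y hy => (iInf_eq_finset_range_inf_of_eq_top (htop y hy)).ge⟩

theorem exists_continuous_ge_eventually_eq {g : X → EReal} {u gs : ℕ → X → EReal}
    (hu : ∀ k, Continuous (u k)) (hgs : ∀ n, Continuous (gs n))
    (hug : ∀ x, ∀ᶠ k in atTop, u k x = g x) (hg : ∀ x, g x = ⨅ n, gs n x) :
    ∃ w : ℕ → X → EReal, (∀ k, Continuous (w k)) ∧ (∀ k x, g x ≤ w k x) ∧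
      ∀ x, ∀ᶠ k in atTop, w k x = g x := by
  choose s hs hs0 hsu using fun k =>
    exists_continuous_eq_zero_iff_forall_eq (fun j => hu (k + j)) fun _ => hu k
  have u_eq_g : ∀ k x, s k x = 0 → u k x = g x := fun k x h => by
    obtain ⟨N, hN⟩ := eventually_atTop.1 (hug x)
    rw [← (hsu k x).1 h N, hN _ (Nat.le_add_left N k)]
  have s_eq_zero : ∀ x, ∀ᶠ k in atTop, s k x = 0 := fun x => by
    obtain ⟨N, hN⟩ := eventually_atTop.1 (hug x)
    filter_upwards [eventually_ge_atTop N] with k hk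
    exact (hsu k x).2 fun j => (hN _ (hk.trans (Nat.le_add_right k j))).trans (hN k hk).symm
  have g_le_gs : ∀ n x, g x ≤ gs n x := fun n x => hg x ▸ iInf_le _ n
  have iInf_eq : ∀ k x, s k x = 0 → ⨅ n, max (u k x) (gs n x) = u k x := fun k x h => by
    simp only [u_eq_g k x h, max_eq_right (g_le_gs _ x)]
    exact (hg x).symm
  refine ⟨fun k x => ⨅ n : ℕ, max (max (u k x) (gs n x)) (botTopRamp (n * s k x)),
    fun k => continuous_iInf_max_botTopRamp (fun n => (hu k).max (hgs n)) (hs k) (hs0 k) (hu k)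
      (fun n x => le_max_left _ _) (iInf_eq k),
    fun k x => le_iInf fun n => (g_le_gs n x).trans ((le_max_right _ _).trans (le_max_left _ _)),
    fun x => (s_eq_zero x).mono fun k hk => ?_⟩
  simp only [hk, mul_zero, botTopRamp_zero, max_bot_right]
  rw [iInf_eq k x hk, u_eq_g k x hk]

theorem exists_continuous_le_eventually_eq {h : X → EReal} {v hs : ℕ → X → EReal}
    (hv : ∀ k, Continuous (v k)) (hhs : ∀ n, Continuous (hs n))
    (hvh : ∀ x, ∀ᶠ k in atTop, v k x = h x) (hh : ∀ x, h x = ⨆ n, hs n x) :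
    ∃ W : ℕ → X → EReal, (∀ k, Continuous (W k)) ∧ (∀ k x, W k x ≤ h x) ∧
      ∀ x, ∀ᶠ k in atTop, W k x = h x := by
  obtain ⟨w, hw, hw_ge, hw_eq⟩ := exists_continuous_ge_eventually_eq (g := fun x => -h x)
    (u := fun k x => -v k x) (gs := fun n x => -hs n x) (fun k => (hv k).neg)
    (fun n => (hhs n).neg) (fun x => (hvh x).mono fun k hk => by rw [hk])
    fun x => by rw [hh x]; exact EReal.negOrderIso.map_iSup _
  exact ⟨fun k x => -w k x, fun k => (hw k).neg, fun k x => EReal.neg_le.1 (hw_ge k x),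
    fun x => (hw_eq x).mono fun k hk => by simp only [hk, neg_neg]⟩

theorem stablePairOfHahn_of_between {g h q : X → EReal} {w W : ℕ → X → EReal}
    (hw : ∀ k, Continuous (w k)) (hW : ∀ k, Continuous (W k)) (hq : Continuous q)
    (hgw : ∀ k x, g x ≤ w k x) (hWh : ∀ k x, W k x ≤ h x)
    (hw_eq : ∀ x, ∃ k, w k x = g x) (hW_eq : ∀ x, ∃ k, W k x = h x)
    (hgq : ∀ x, g x ≤ q x) (hqh : ∀ x, q x ≤ h x) : StablePairOfHahn g h := by
  set a : ℕ ⊕ ℕ → X → EReal :=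
    Sum.elim (fun k x => min (w k x) (q x)) (fun k x => max (W k x) (q x))
  have ha : ∀ i, Continuous (a i)
    | .inl k => (hw k).min hq
    | .inr k => (hW k).max hq
  have g_le_a : ∀ i x, g x ≤ a i x
    | .inl k, x => le_min (hgw k x) (hgq x)
    | .inr k, x => (hgq x).trans (le_max_right _ _)
  have a_le_h : ∀ i x, a i x ≤ h x
    | .inl k, x => (min_le_right _ _).trans (hqh x)
    | .inr k, x => max_le (hWh k x) (hqh x)
  have range_eq : ∀ x, (range fun n => a (Equiv.natSumNatEquivNat.symm n) x) = range (a · x) :=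
    fun x => Equiv.natSumNatEquivNat.symm.surjective.range_comp (a · x)
  refine ⟨fun n => a (Equiv.natSumNatEquivNat.symm n), fun n => ha _, fun x => ?_⟩
  obtain ⟨k, hk⟩ := hw_eq x
  obtain ⟨l, hl⟩ := hW_eq x
  rw [range_eq]
  exact ⟨⟨⟨.inl k, by simp [a, hk, hgq x]⟩, forall_mem_range.2 (g_le_a · x)⟩,
    ⟨⟨.inr l, by simp [a, hl, hqh x]⟩, forall_mem_range.2 (a_le_h · x)⟩⟩

end ERealValued

theorem stmt4 {X : Type*} [TopologicalSpace X] (g h : X → EReal)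
    (hc : CountablePairOfHahn g h) (hg : FirstStableBaireClass g)
    (hh : FirstStableBaireClass h) :
    StablePairOfHahn g h := by
  obtain ⟨gs, hs, hgs, hhs, hgh⟩ := hc
  obtain ⟨u, hu, hug⟩ := hg
  obtain ⟨v, hv, hvh⟩ := hh
  obtain ⟨w, hw, hgw, hw_eq⟩ := exists_continuous_ge_eventually_eq hu hgs
    (fun x => eventually_atTop.2 (hug x)) fun x => (hgh x).1
  obtain ⟨W, hW, hWh, hW_eq⟩ := exists_continuous_le_eventually_eq hv hhs
    (fun x => eventually_atTop.2 (hvh x)) fun x => (hgh x).2.1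
  obtain ⟨q, hq, hgq, hqh⟩ :=
    exists_continuous_between_s4 hw hW hgw hWh hw_eq hW_eq fun x => (hgh x).2.2
  exact stablePairOfHahn_of_between hw hW hq hgw hWh (fun x => (hw_eq x).exists)
    (fun x => (hW_eq x).exists) hgq hqh
end

section
/- Let αT = T ∪ {∞} be the Alexandroff (one-point) compactification of a discrete space T, and let f : αT → ℝ be a Baire one function. Then there exists a countable set S ⊆ T such that f is constant on αT \ S. -/
/-- A real-valued function is *Baire one* if it is the pointwise limit of a sequence
of continuous functions. -/
def BaireOne {X : Type*} [TopologicalSpace X] (f : X → ℝ) : Prop :=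
  ∃ u : ℕ → X → ℝ, (∀ n, Continuous (u n)) ∧
    ∀ x, Filter.Tendsto (fun n => u n x) Filter.atTop (nhds (f x))

/-!
A continuous map on `OnePoint T` tends to its value at `∞` along the cofinite filter of `T`, so
in a first-countable Hausdorff target it differs from that value at only countably many points.
A pointwise limit of a sequence of such maps can differ from its value at `∞` only where one of
them does, which is a countable union of countable sets.
-/

open Filter Topology

namespace OnePoint

variable {X Y : Type*} [TopologicalSpace X] [DiscreteTopology X] [TopologicalSpace Y]
  [FirstCountableTopology Y]

theorem countable_setOf_ne_infty_of_continuous [T1Space Y] {g : OnePoint X → Y}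
    (hg : Continuous g) : {x : X | g x ≠ g ∞}.Countable := by
  have h := ((continuous_iff_from_discrete g).mp hg).countable_compl_preimage_ker
  rwa [ker_nhds] at h

theorem countable_setOf_ne_infty_of_tendsto_continuous [T2Space Y] {u : ℕ → OnePoint X → Y}
    {f : OnePoint X → Y} (hu : ∀ n, Continuous (u n))
    (hf : ∀ x, Tendsto (fun n => u n x) atTop (𝓝 (f x))) :
    {x : X | f x ≠ f ∞}.Countable := by
  refine (Set.countable_iUnion fun n => countable_setOf_ne_infty_of_continuous (hu n)).mono ?_
  intro x hx
  by_contra hx'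
  simp only [Set.mem_iUnion, Set.mem_ofPred_eq, not_exists, not_not] at hx'
  exact hx (tendsto_nhds_unique (by simpa only [hx'] using hf x) (hf ∞))

end OnePoint

theorem stmt6 {T : Type*} [TopologicalSpace T] [DiscreteTopology T]
    (f : OnePoint T → ℝ) (hf : BaireOne f) :
    ∃ S : Set T, S.Countable ∧
      ∀ x : OnePoint T, x ∉ ((↑·) : T → OnePoint T) '' S → f x = f OnePoint.infty := by
  obtain ⟨u, hu, hlim⟩ := hf
  refine ⟨_, OnePoint.countable_setOf_ne_infty_of_tendsto_continuous hu hlim, ?_⟩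
  intro x hx
  induction x using OnePoint.rec with
  | infty => rfl
  | coe t => exact not_not.mp fun ht => hx ⟨t, ht, rfl⟩
end

section
/- Every first countable scattered compact Hausdorff space is countable. -/
/-!
Call `x` a condensation point if no neighbourhood of `x` is countable. By compactness, a compact
set without condensation points is countable; in particular the condensation points of `X` form
a nonempty set `A` if `X` is uncountable. Scatteredness gives `a ∈ A` and a compact neighbourhood
`C` of `a` meeting `A` only in `a`. Since `{a}` is a `Gδ` set in a first countable `T₁` space,
`C \ {a}` is a countable union of compact sets without condensation points, so `C` is countable,
contradicting `a ∈ A`.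
-/

open Set Filter Topology

/-- A topological space is *scattered* if every nonempty subset `A` has a point
isolated in `A`. -/
def Scattered (X : Type*) [TopologicalSpace X] : Prop :=
  ∀ A : Set X, A.Nonempty → ∃ a ∈ A, ∃ U : Set X, IsOpen U ∧ U ∩ A = {a}

section

variable {X : Type*} [TopologicalSpace X]

lemma IsCompact.countable_of_forall_exists_countable_mem_nhds {K : Set X} (hK : IsCompact K)
    (h : ∀ x ∈ K, ∃ S ∈ 𝓝 x, S.Countable) : K.Countable := by
  choose! S hS hSc using h
  obtain ⟨t, htK, hKt⟩ := hK.elim_nhds_subcover S hS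
  exact (t.countable_toSet.biUnion fun x hx ↦ hSc x (htK x hx)).mono hKt

lemma IsCompact.countable_diff_of_isGδ {K G : Set X} (hK : IsCompact K) (hG : IsGδ G)
    (h : ∀ x ∈ K \ G, ∃ S ∈ 𝓝 x, S.Countable) : (K \ G).Countable := by
  obtain ⟨f, hf, rfl⟩ := hG.eq_iInter_nat
  rw [sdiff_iInter]
  exact countable_iUnion fun n ↦ (hK.diff (hf n)).countable_of_forall_exists_countable_mem_nhds
    fun x hx ↦ h x ⟨hx.1, fun hxf ↦ hx.2 (mem_iInter.1 hxf n)⟩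

lemma IsCompact.countable_of_forall_ne_exists_countable_mem_nhds [T1Space X]
    [FirstCountableTopology X] {K : Set X} (hK : IsCompact K) (a : X)
    (h : ∀ x ∈ K, x ≠ a → ∃ S ∈ 𝓝 x, S.Countable) : K.Countable :=
  ((countable_singleton a).union (hK.countable_diff_of_isGδ (.singleton a)
    fun x hx ↦ h x hx.1 hx.2)).mono fun x hx ↦ by simp [hx]

end

theorem stmt9 {X : Type*} [TopologicalSpace X] [CompactSpace X] [T2Space X]
    [FirstCountableTopology X] (hX : Scattered X) :
    Countable X := by
  set A : Set X := {x | ∀ S ∈ 𝓝 x, ¬S.Countable}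
  rcases A.eq_empty_or_nonempty with hA | hA
  · rw [← countable_univ_iff]
    refine isCompact_univ.countable_of_forall_exists_countable_mem_nhds fun x _ ↦ ?_
    simpa [A] using (hA ▸ notMem_empty x : x ∉ A)
  obtain ⟨a, haA, U, hU, hUA⟩ := hX A hA
  have haU : a ∈ U := (hUA.symm ▸ mem_singleton a : a ∈ U ∩ A).1
  obtain ⟨C, hCa, hCU, hC⟩ := local_compact_nhds (hU.mem_nhds haU)
  refine (haA C hCa <|
    hC.countable_of_forall_ne_exists_countable_mem_nhds a fun x hxC hxa ↦ ?_).elim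
  have hxA : x ∉ A := fun hxA ↦ hxa (hUA.subset ⟨hCU hxC, hxA⟩)
  simpa [A] using hxA
end

section
/- Let X be a separable topological space, Y a scattered compact Hausdorff space, and f : X × Y → ℝ̄ a separately continuous function. Then the pair of extremal sections (∧_f, ∨_f) is a stable pair of Hahn on X. -/
/-!
Fix a countable dense set `s ⊆ X` and send `y` to its trace `(f (d, y))_{d ∈ s}` in the second
countable space `s → ℝ̄`. A continuous image of a compact scattered space is scattered, and a closed
scattered set in a second countable space is countable (its perfect kernel is empty), so there are
only countably many traces. By density a trace determines the continuous section `f (·, y)`, so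
countably many points `y n` give all sections; by compactness the infimum and supremum over `y`
are attained, hence attained along `f (·, y n)`.
-/

section

open Set

variable {X Y Z : Type*} [TopologicalSpace X] [TopologicalSpace Y] [TopologicalSpace Z]

def Set.IsScattered (K : Set Z) : Prop :=
  ∀ D ⊆ K, D.Nonempty → ∃ z ∈ D, ∃ V : Set Z, IsOpen V ∧ V ∩ D = {z}

theorem Set.IsScattered.countable [SecondCountableTopology Z] {K : Set Z} (hK : K.IsScattered)
    (hKc : IsClosed K) : K.Countable := by
  obtain ⟨V, D, hV, hD, rfl⟩ := exists_countable_union_perfect_of_isClosed hKc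
  rcases D.eq_empty_or_nonempty with rfl | hDne
  · simpa using hV
  obtain ⟨z, hz, W, hW, hWD⟩ := hK D subset_union_right hDne
  obtain ⟨y, ⟨hyW, hyD⟩, hyz⟩ := preperfect_iff_nhds.mp hD.acc z hz W
    (hW.mem_nhds (hWD.symm ▸ rfl : z ∈ W ∩ D).1)
  exact absurd (hWD ▸ ⟨hyW, hyD⟩ : y ∈ ({z} : Set Z)) hyz

theorem exists_minimal_isClosed_image_superset [CompactSpace Y] [T1Space Z] {φ : Y → Z}
    (hφ : Continuous φ) {D : Set Z} (hD : D ⊆ range φ) :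
    ∃ C, Minimal (fun C => IsClosed C ∧ D ⊆ φ '' C) C := by
  refine zorn_superset _ fun c hc hchain => ⟨⋂₀ c, ⟨isClosed_sInter fun C hC => (hc hC).1,
    fun d hd => ?_⟩, fun C hC => sInter_subset_of_mem hC⟩
  rcases c.eq_empty_or_nonempty with rfl | hne
  · simpa using hD hd
  have := hne.to_subtype
  have hfiber : ∀ C : c, IsClosed ((C : Set Y) ∩ φ ⁻¹' {d}) := fun C =>
    (hc C.2).1.inter (isClosed_singleton.preimage hφ)
  obtain ⟨y, hy⟩ := IsCompact.nonempty_iInter_of_directed_nonempty_isCompact_isClosed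
    (fun C : c => (C : Set Y) ∩ φ ⁻¹' {d})
    (fun C C' => (hchain.total C.2 C'.2).elim
      (fun h => ⟨C, subset_rfl, inter_subset_inter_left _ h⟩)
      (fun h => ⟨C', inter_subset_inter_left _ h, subset_rfl⟩))
    (fun C => by obtain ⟨y, hyC, hyd⟩ := (hc C.2).2 hd; exact ⟨y, hyC, hyd⟩)
    (fun C => (hfiber C).isCompact) hfiber
  simp only [mem_iInter, mem_inter_iff, mem_preimage, mem_singleton_iff] at hy
  exact ⟨y, mem_sInter.2 fun C hC => (hy ⟨C, hC⟩).1, (hy ⟨_, hne.some_mem⟩).2⟩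

/-- Isolated points come from a closed set `C` minimal with `D ⊆ φ '' C`: removing from `C` the
neighbourhood `U` of a point `a` isolated in `C` loses part of `D`, and only `φ a` can be lost. -/
theorem Scattered.isScattered_range [CompactSpace Y] [T2Space Z] (hY : Scattered Y) {φ : Y → Z}
    (hφ : Continuous φ) : (range φ).IsScattered := by
  intro D hDφ hDne
  obtain ⟨C, ⟨hC, hDC⟩, hCmin⟩ := exists_minimal_isClosed_image_superset hφ hDφ
  obtain ⟨a, haC, U, hU, hUC⟩ := hY C (hDne.mono hDC |>.of_image)
  have hlost : ∀ z ∈ D, z ∉ φ '' (C \ U) → z = φ a := by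
    rintro z hz hzU
    obtain ⟨m, hmC, rfl⟩ := hDC hz
    have hmU : m ∈ U := by_contra fun hmU => hzU ⟨m, ⟨hmC, hmU⟩, rfl⟩
    rw [(hUC ▸ ⟨hmU, hmC⟩ : m ∈ ({a} : Set Y))]
  have haU : a ∈ U := (hUC.symm ▸ rfl : a ∈ U ∩ C).1
  obtain ⟨z, hz, hzU⟩ : ∃ z ∈ D, z ∉ φ '' (C \ U) := not_subset.mp fun hsub =>
    (hCmin ⟨hC.sdiff hU, hsub⟩ sdiff_subset haC).2 haU
  refine ⟨z, hz, (φ '' (C \ U))ᶜ, ((hC.sdiff hU).isCompact.image hφ).isClosed.isOpen_compl, ?_⟩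
  refine subset_antisymm (fun w ⟨hwU, hw⟩ => ?_) (singleton_subset_iff.2 ⟨hzU, hz⟩)
  exact (hlost w hw hwU).trans (hlost z hz hzU).symm

theorem Scattered.countable_range [CompactSpace Y] [T2Space Z] [SecondCountableTopology Z]
    (hY : Scattered Y) {φ : Y → Z} (hφ : Continuous φ) : (range φ).Countable :=
  (hY.isScattered_range hφ).countable (isCompact_range hφ).isClosed

theorem Scattered.exists_seq_sections_eq [TopologicalSpace.SeparableSpace X] [CompactSpace Y]
    [Nonempty Y] [T2Space Z] [SecondCountableTopology Z] (hY : Scattered Y) {f : X × Y → Z}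
    (hf1 : ∀ x, Continuous fun y => f (x, y)) (hf2 : ∀ y, Continuous fun x => f (x, y)) :
    ∃ v : ℕ → Y, ∀ y, ∃ n, ∀ x, f (x, v n) = f (x, y) := by
  obtain ⟨s, hs, hsd⟩ := TopologicalSpace.exists_countable_dense X
  have := hs.to_subtype
  set trace : Y → s → Z := fun y d => f (d, y)
  obtain ⟨e, he⟩ := (hY.countable_range (φ := trace) (continuous_pi fun d => hf1 d)).exists_eq_range
    (range_nonempty _)
  choose v hv using fun n => (he ▸ mem_range_self n : e n ∈ range trace)
  refine ⟨v, fun y => ?_⟩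
  obtain ⟨n, hn⟩ : trace y ∈ range e := he ▸ mem_range_self y
  refine ⟨n, congrFun (Continuous.ext_on hsd (hf2 (v n)) (hf2 y) fun x hx => ?_)⟩
  exact congrFun ((hv n).trans hn) ⟨x, hx⟩

theorem stablePairOfHahn_iInf_iSup_of_range_eq [CompactSpace Y] [Nonempty Y] {F : X → Y → EReal}
    (hF : ∀ x, Continuous (F x)) {u : ℕ → X → EReal} (hu : ∀ n, Continuous (u n))
    (hrange : ∀ x, range (fun n => u n x) = range (F x)) :
    StablePairOfHahn (fun x => ⨅ y, F x y) (fun x => ⨆ y, F x y) := by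
  refine ⟨u, hu, fun x => ?_⟩
  rw [hrange x]
  exact ⟨(isCompact_range (hF x)).isLeast_sInf (range_nonempty _),
    (isCompact_range (hF x)).isGreatest_sSup (range_nonempty _)⟩

end

theorem stmt10_general {X Y : Type*} [TopologicalSpace X] [TopologicalSpace.SeparableSpace X]
    [TopologicalSpace Y] [CompactSpace Y] [Nonempty Y]
    (hY : Scattered Y)
    (f : X × Y → EReal)
    (hf1 : ∀ x : X, Continuous fun y : Y => f (x, y))
    (hf2 : ∀ y : Y, Continuous fun x : X => f (x, y)) :
    StablePairOfHahn (fun x => ⨅ y : Y, f (x, y)) (fun x => ⨆ y : Y, f (x, y)) := by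
  obtain ⟨v, hv⟩ := hY.exists_seq_sections_eq hf1 hf2
  refine stablePairOfHahn_iInf_iSup_of_range_eq hf1 (fun n => hf2 (v n)) fun x => ?_
  refine subset_antisymm (Set.range_subset_iff.2 fun n => Set.mem_range_self _) ?_
  rintro _ ⟨y, rfl⟩
  obtain ⟨n, hn⟩ := hv y
  exact ⟨n, hn x⟩

theorem stmt10 {X Y : Type*} [TopologicalSpace X] [TopologicalSpace.SeparableSpace X]
    [TopologicalSpace Y] [CompactSpace Y] [T2Space Y] [Nonempty Y]
    (hY : Scattered Y)
    (f : X × Y → EReal)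
    (hf1 : ∀ x : X, Continuous fun y : Y => f (x, y))
    (hf2 : ∀ y : Y, Continuous fun x : X => f (x, y)) :
    StablePairOfHahn (fun x => ⨅ y : Y, f (x, y)) (fun x => ⨆ y : Y, f (x, y)) :=
  stmt10_general hY f hf1 hf2
end

section
/- Let X be an infinite regular topological space. Then there exists a sequence (G_n)_{n∈ℕ} of pairwise disjoint infinite open subsets of X. -/
theorem stmt13 {X : Type*} [TopologicalSpace X] [RegularSpace X] [T1Space X]
    [Infinite X] :
    ∃ G : ℕ → Set X, (∀ n, IsOpen (G n) ∧ (G n).Infinite) ∧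
      ∀ n m, n ≠ m → Disjoint (G n) (G m) := by
  obtain ⟨G, hinf, hopen, hdisj⟩ := exists_seq_infinite_isOpen_pairwise_disjoint X
  exact ⟨G, fun n => ⟨hopen n, hinf n⟩, fun _ _ => @hdisj _ _⟩
end

section
/- Let X be a completely regular topological space and G an infinite open subset of X. Then there exist a sequence (x_n)_{n∈ℕ} of points of G and a continuous function f : X → [-1,1] such that supp f ⊆ G, f(x_{2k-1}) = 1/k and f(x_{2k}) = -1/k for every k ∈ ℕ. -/
/-!
A T₃.₅ space is T₂.₅, so two points of an infinite open set `V` have open neighbourhoods in `V`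
with disjoint closures; removing one of these closures from `V` leaves an infinite open set.
Iterating gives pairwise disjoint open sets `U n ⊆ G` with points `y n ∈ U n`, and Urysohn
bumps `g n` supported in `U n` with `g n (y n) = 1`. Then `f = ∑ c n * g n` with `c n = ±1/k`
works: at each point at most one term is nonzero, so `c n → 0` makes the partial sums converge
uniformly.
-/

open Set Function Filter Topology

section DisjointSupports

variable {X : Type*} {g : ℕ → X → ℝ}

theorem exists_forall_ne_eq_zero_of_pairwise_disjoint_support
    (hd : Pairwise (Disjoint on fun n => support (g n))) (x : X) :
    ∃ i, ∀ n ≠ i, g n x = 0 := by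
  by_cases h : ∃ i, g i x ≠ 0
  · obtain ⟨i, hi⟩ := h
    exact ⟨i, fun n hn => by_contra fun hn' => Set.disjoint_left.1 (hd hn) hn' hi⟩
  · push Not at h
    exact ⟨0, fun n _ => h n⟩

theorem tsum_mul_eq_of_forall_ne_eq_zero (c : ℕ → ℝ) {x : X} {i : ℕ}
    (hi : ∀ n ≠ i, g n x = 0) : ∑' n, c n * g n x = c i * g i x :=
  tsum_eq_single i fun n hn => by simp [hi n hn]

theorem continuous_tsum_mul_of_pairwise_disjoint_support [TopologicalSpace X]
    (hg : ∀ n, Continuous (g n)) (hg1 : ∀ n x, |g n x| ≤ 1)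
    (hd : Pairwise (Disjoint on fun n => support (g n))) {c : ℕ → ℝ}
    (hc : Tendsto c atTop (𝓝 0)) : Continuous fun x => ∑' n, c n * g n x := by
  refine TendstoUniformly.continuous (F := fun N x => ∑ n ∈ Finset.range N, c n * g n x)
    (p := atTop) ?_
    (Frequently.of_forall fun N => by fun_prop)
  rw [Metric.tendstoUniformly_iff]
  intro ε hε
  obtain ⟨N₀, hN₀⟩ := Metric.tendsto_atTop.1 hc ε hε
  filter_upwards [eventually_ge_atTop N₀] with N hN x
  obtain ⟨i, hi⟩ := exists_forall_ne_eq_zero_of_pairwise_disjoint_support hd x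
  have hzero : ∀ n ≠ i, c n * g n x = 0 := fun n hn => by simp [hi n hn]
  rw [tsum_mul_eq_of_forall_ne_eq_zero c hi]
  by_cases hiN : i < N
  · rw [Finset.sum_eq_single_of_mem i (Finset.mem_range.2 hiN) fun n _ => hzero n]
    simpa using hε
  · rw [Finset.sum_eq_zero fun n hn => hzero n (by simp at hn; omega), dist_zero_right,
      norm_mul]
    have hci := hN₀ i (by omega)
    rw [dist_zero_right] at hci
    exact (mul_le_of_le_one_right (norm_nonneg _) (hg1 i x)).trans_lt hci

end DisjointSupports

section PairwiseDisjointOpens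

variable {X : Type*} [TopologicalSpace X]

theorem IsOpen.exists_mem_subset_infinite_diff_closure [T25Space X] {V : Set X} (hVo : IsOpen V)
    (hVi : V.Infinite) :
    ∃ y : X, ∃ U : Set X, IsOpen U ∧ y ∈ U ∧ U ⊆ V ∧ (V \ closure U).Infinite := by
  obtain ⟨a, ha, b, hb, hab⟩ := hVi.nontrivial
  obtain ⟨u, hau, huo, v, hbv, hvo, huv⟩ := exists_open_nhds_disjoint_closure hab
  have hcover : V ⊆ (V \ closure (u ∩ V)) ∪ (V \ closure (v ∩ V)) := by
    intro x hx
    by_cases hxu : x ∈ closure (u ∩ V)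
    · exact Or.inr ⟨hx, fun hxv => Set.disjoint_left.1 huv (closure_mono inter_subset_left hxu)
        (closure_mono inter_subset_left hxv)⟩
    · exact Or.inl ⟨hx, hxu⟩
  rcases infinite_union.1 (hVi.mono hcover) with hu | hv
  · exact ⟨a, u ∩ V, huo.inter hVo, ⟨hau, ha⟩, inter_subset_right, hu⟩
  · exact ⟨b, v ∩ V, hvo.inter hVo, ⟨hbv, hb⟩, inter_subset_right, hv⟩

theorem IsOpen.exists_seq_pairwise_disjoint_isOpen_subset [T25Space X] {G : Set X}
    (hGo : IsOpen G) (hGi : G.Infinite) :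
    ∃ (y : ℕ → X) (U : ℕ → Set X), (∀ n, IsOpen (U n)) ∧ (∀ n, y n ∈ U n) ∧ (∀ n, U n ⊆ G) ∧
      Pairwise (Disjoint on U) := by
  choose y U hUo hyU hUV hVi using fun V : {V : Set X // IsOpen V ∧ V.Infinite} =>
    V.2.1.exists_mem_subset_infinite_diff_closure V.2.2
  let next (V : {V : Set X // IsOpen V ∧ V.Infinite}) : {V : Set X // IsOpen V ∧ V.Infinite} :=
    ⟨V.1 \ closure (U V), V.2.1.sdiff isClosed_closure, hVi V⟩
  let V (n : ℕ) := next^[n] ⟨G, hGo, hGi⟩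
  have hV_succ (n : ℕ) : (V (n + 1)).1 = (V n).1 \ closure (U (V n)) := by
    simp only [V]
    rw [iterate_succ_apply']
  have hV : Antitone fun n => (V n).1 :=
    antitone_nat_of_succ_le fun n => (hV_succ n).trans_le sdiff_subset
  refine ⟨fun n => y (V n), fun n => U (V n), fun n => hUo _, fun n => hyU _,
    fun n => (hUV _).trans (hV n.zero_le), (pairwise_disjoint_on _).2 fun m n hmn => ?_⟩
  have hUn : U (V n) ⊆ (V m).1 \ closure (U (V m)) := hV_succ m ▸ (hUV _).trans (hV hmn)
  exact (disjoint_sdiff_right.mono_left subset_closure).mono_right hUn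

end PairwiseDisjointOpens

theorem CompletelyRegularSpace.exists_continuous_abs_le_one_support_subset {X : Type*}
    [TopologicalSpace X] [CompletelyRegularSpace X] {U : Set X} (hU : IsOpen U) {y : X}
    (hy : y ∈ U) :
    ∃ g : X → ℝ, Continuous g ∧ g y = 1 ∧ (∀ x, |g x| ≤ 1) ∧ support g ⊆ U := by
  obtain ⟨f, hf, hfy, hfU⟩ := CompletelyRegularSpace.completely_regular_isOpen y U hU hy
  refine ⟨fun x => 1 - f x, by fun_prop, by simp [hfy], fun x => ?_, fun x hx => ?_⟩
  · exact abs_le.2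
      ⟨by linarith [unitInterval.le_one (f x)], by linarith [unitInterval.nonneg (f x)]⟩
  · by_contra hxU
    exact hx (by simp [hfU hxU])

/-- `alternatingHalfInv (2 * k - 1) = 1 / k` and `alternatingHalfInv (2 * k) = -1 / k` for
`k ≥ 1`; the value at `0` is `0`, as `1 / 0 = 0`. -/
noncomputable def alternatingHalfInv (n : ℕ) : ℝ := (-1) ^ (n + 1) / ((n + 1) / 2 : ℕ)

theorem abs_alternatingHalfInv (n : ℕ) :
    |alternatingHalfInv n| = (((n + 1) / 2 : ℕ) : ℝ)⁻¹ := by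
  simp [alternatingHalfInv, abs_div]

theorem abs_alternatingHalfInv_le_one (n : ℕ) : |alternatingHalfInv n| ≤ 1 :=
  (abs_alternatingHalfInv n).trans_le (Nat.cast_inv_le_one _)

theorem tendsto_alternatingHalfInv : Tendsto alternatingHalfInv atTop (𝓝 0) := by
  refine squeeze_zero_norm (fun n => (abs_alternatingHalfInv n).le) ?_
  exact tendsto_inv_atTop_zero.comp <| tendsto_natCast_atTop_atTop.comp <|
    (Nat.tendsto_div_const_atTop two_ne_zero).comp (tendsto_add_atTop_nat 1)

theorem alternatingHalfInv_two_mul_add_one (k : ℕ) :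
    alternatingHalfInv (2 * k + 1) = 1 / (k + 1) := by
  rw [alternatingHalfInv, show (2 * k + 1 + 1) / 2 = k + 1 by omega,
    Even.neg_one_pow ⟨k + 1, by ring⟩]
  push_cast
  ring

theorem alternatingHalfInv_two_mul_add_two (k : ℕ) :
    alternatingHalfInv (2 * (k + 1)) = -(1 / (k + 1)) := by
  rw [alternatingHalfInv, show (2 * (k + 1) + 1) / 2 = k + 1 by omega,
    Odd.neg_one_pow ⟨k + 1, rfl⟩]
  push_cast
  ring

theorem stmt15 {X : Type*} [TopologicalSpace X] [CompletelyRegularSpace X] [T1Space X]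
    (G : Set X) (hGo : IsOpen G) (hGi : G.Infinite) :
    ∃ (x : ℕ → X) (f : X → ℝ), (∀ n, x n ∈ G) ∧ Continuous f ∧
      (∀ a, f a ∈ Set.Icc (-1 : ℝ) 1) ∧ Function.support f ⊆ G ∧
      ∀ k : ℕ, f (x (2 * (k + 1) - 1)) = 1 / (k + 1) ∧
        f (x (2 * (k + 1))) = -(1 / (k + 1)) := by
  obtain ⟨y, U, hUo, hyU, hUG, hUd⟩ := hGo.exists_seq_pairwise_disjoint_isOpen_subset hGi
  choose g hgc hgy hg1 hgU using fun n =>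
    CompletelyRegularSpace.exists_continuous_abs_le_one_support_subset (hUo n) (hyU n)
  have hd : Pairwise (Disjoint on fun n => support (g n)) :=
    fun m n hmn => (hUd hmn).mono (hgU m) (hgU n)
  have hgy_ne (m n : ℕ) (hnm : n ≠ m) : g n (y m) = 0 :=
    notMem_support.1 fun h => Set.disjoint_left.1 (hd hnm) h (by simp [hgy m])
  have hfy (m : ℕ) : ∑' n, alternatingHalfInv n * g n (y m) = alternatingHalfInv m := by
    rw [tsum_mul_eq_of_forall_ne_eq_zero _ (hgy_ne m), hgy, mul_one]
  refine ⟨y, fun x => ∑' n, alternatingHalfInv n * g n x, fun n => hUG n (hyU n),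
    continuous_tsum_mul_of_pairwise_disjoint_support hgc hg1 hd tendsto_alternatingHalfInv,
    fun x => ?_, fun x hx => ?_, fun k => ?_⟩
  · dsimp only
    obtain ⟨i, hi⟩ := exists_forall_ne_eq_zero_of_pairwise_disjoint_support hd x
    rw [tsum_mul_eq_of_forall_ne_eq_zero _ hi, mem_Icc, ← abs_le, abs_mul]
    exact mul_le_one₀ (abs_alternatingHalfInv_le_one i) (abs_nonneg _) (hg1 i x)
  · obtain ⟨i, hi⟩ := exists_forall_ne_eq_zero_of_pairwise_disjoint_support hd x
    rw [mem_support, tsum_mul_eq_of_forall_ne_eq_zero _ hi] at hx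
    exact hUG i (hgU i (right_ne_zero_of_mul hx))
  · rw [show 2 * (k + 1) - 1 = 2 * k + 1 by omega]
    exact ⟨(hfy _).trans (alternatingHalfInv_two_mul_add_one k),
      (hfy _).trans (alternatingHalfInv_two_mul_add_two k)⟩
end
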